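/- (Proposition 2, monotonicity of the iterates.) Under (A1) and (A2), the sequence of functions defined by u_0 := ψ_2 and u_n := T u_{n−1} for n ≥ 1 is pointwise nondecreasing: u_n(i) ≤ u_{n+1}(i) for all n ≥ 0 and all i ∈ S. -/

import Mathlib

/-!
`T` is monotone on nonnegative functions bounded by a multiple of `W`, and every iterate lies
between `ψ₂` and `ψ₁ ≤ M W`; since `u₀ = ψ₂ ≤ Tψ₂ = u₁`, induction gives `u_n ≤ u_{n+1}`.

Monotonicity of `I_α` needs the uniformized kernel `p̃(·|i,μ,ν)` to be nonnegative (the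
diagonal rate is at least `-q(i)`) and `∑_j p̃(j|i,μ,ν) W(j)` to be bounded uniformly in
`(μ,ν)`. The latter holds because at pure actions `(a,b)` this sum is continuous on the compact
`U × V`. The bound keeps every supremum in `I_α` finite and every series summable, so that
monotonicity is not destroyed by the junk values of `⨆` and `∑'`.
-/

open MeasureTheory Filter Topology

noncomputable section

variable {U V : Type}

/-- Integrated reward rate `r̃(i,μ,ν)`. -/
def rT [MeasurableSpace U] [MeasurableSpace V] (r : ℕ → U → V → ℝ) (i : ℕ)
    (μ : ProbabilityMeasure U) (ν : ProbabilityMeasure V) : ℝ :=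
  ∫ b, (∫ a, r i a b ∂(μ : Measure U)) ∂(ν : Measure V)

/-- Integrated transition rate `q̃(j|i,μ,ν)`. -/
def qT [MeasurableSpace U] [MeasurableSpace V] (q : ℕ → ℕ → U → V → ℝ) (i j : ℕ)
    (μ : ProbabilityMeasure U) (ν : ProbabilityMeasure V) : ℝ :=
  ∫ b, (∫ a, q i j a b ∂(μ : Measure U)) ∂(ν : Measure V)

/-- `p̃(j|i,μ,ν) = q̃(j|i,μ,ν)/(q(i)+1) + δ_{ij}`. -/
def pT [MeasurableSpace U] [MeasurableSpace V] (q : ℕ → ℕ → U → V → ℝ) (qb : ℕ → ℝ)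
    (i j : ℕ) (μ : ProbabilityMeasure U) (ν : ProbabilityMeasure V) : ℝ :=
  qT q i j μ ν / (qb i + 1) + (if i = j then (1 : ℝ) else 0)

/-- `H_α(i,φ)`. -/
def Hop [MeasurableSpace U] [MeasurableSpace V] (q : ℕ → ℕ → U → V → ℝ)
    (r : ℕ → U → V → ℝ) (φ : ℕ → ℝ) (i : ℕ) : ℝ :=
  ⨅ μ : ProbabilityMeasure U, ⨆ ν : ProbabilityMeasure V,
    (rT r i μ ν + ∑' j, qT q i j μ ν * φ j)

/-- `I_α(i,φ)`. -/
def Iop [MeasurableSpace U] [MeasurableSpace V] (q : ℕ → ℕ → U → V → ℝ)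
    (r : ℕ → U → V → ℝ) (qb : ℕ → ℝ) (α : ℝ) (φ : ℕ → ℝ) (i : ℕ) : ℝ :=
  ⨅ μ : ProbabilityMeasure U, ⨆ ν : ProbabilityMeasure V,
    (rT r i μ ν / (α + qb i + 1) +
      ((qb i + 1) / (α + qb i + 1)) * ∑' j, pT q qb i j μ ν * φ j)

/-- The operator `T`. -/
def Tmap [MeasurableSpace U] [MeasurableSpace V] (q : ℕ → ℕ → U → V → ℝ)
    (r : ℕ → U → V → ℝ) (qb : ℕ → ℝ) (α : ℝ) (ψ₁ ψ₂ : ℕ → ℝ)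
    (φ : ℕ → ℝ) (i : ℕ) : ℝ :=
  min (max (Iop q r qb α φ i) (ψ₂ i)) (ψ₁ i)

/-- The space `B_W(S)` of nonnegative functions with finite weighted sup-norm. -/
def BW (W : ℕ → ℝ) : Set (ℕ → ℝ) :=
  {f | (∀ i, 0 ≤ f i) ∧ BddAbove (Set.range fun i => f i / W i)}

/-- The weighted sup-norm `‖f‖_W`. -/
def normW (W : ℕ → ℝ) (f : ℕ → ℝ) : ℝ := ⨆ i, f i / W i

/-- Basic properties of the transition rates: nonnegativity off the diagonal,
conservativeness and stability (`qb i` is the least upper bound `q(i)`). -/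
structure RateHyps (q : ℕ → ℕ → U → V → ℝ) (qb : ℕ → ℝ) : Prop where
  off_nonneg : ∀ i j a b, j ≠ i → 0 ≤ q i j a b
  summable : ∀ i a b, Summable fun j => q i j a b
  conservative : ∀ i a b, ∑' j, q i j a b = 0
  stable : ∀ i, IsLUB (Set.range fun ab : U × V =>
    ∑' j, if j = i then (0 : ℝ) else q i j ab.1 ab.2) (qb i)

/-- Assumption (A1) (with `w 0, …, w (N-1)` playing the role of `w_1, …, w_N`,
and `W = w_1 + ⋯ + w_N`). -/
structure A1Hyps (q : ℕ → ℕ → U → V → ℝ) (qb : ℕ → ℝ) (N : ℕ) (w : ℕ → ℕ → ℝ)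
    (c : ℝ) (W : ℕ → ℝ) : Prop where
  N_pos : 0 < N
  c_pos : 0 < c
  w_nonneg : ∀ n i, 0 ≤ w n i
  w_summable : ∀ n, n < N → ∀ i a b, Summable fun j => q i j a b * w n j
  w_rec : ∀ n, n + 1 < N → ∀ i a b, ∑' j, q i j a b * w n j ≤ w (n + 1) i
  w_last : ∀ i a b, ∑' j, q i j a b * w (N - 1) j ≤ 0
  qb_le : ∀ i, qb i ≤ c * W i
  W_def : ∀ i, W i = ∑ n ∈ Finset.range N, w n i
  W_pos : ∀ i, 0 < W i

/-- Assumption (A2), parts (ii)-(iv) concerning `r` and `q`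
(compactness of `U` and `V` is imposed through instance arguments). -/
structure A2Hyps [TopologicalSpace U] [TopologicalSpace V] (q : ℕ → ℕ → U → V → ℝ)
    (r : ℕ → U → V → ℝ) (W : ℕ → ℝ) (M : ℝ) : Prop where
  r_nonneg : ∀ i a b, 0 ≤ r i a b
  r_cont : ∀ i, Continuous fun ab : U × V => r i ab.1 ab.2
  q_cont : ∀ i j, Continuous fun ab : U × V => q i j ab.1 ab.2
  qW_cont : ∀ i, Continuous fun ab : U × V => ∑' j, q i j ab.1 ab.2 * W j
  r_le : ∀ i a b, r i a b ≤ M * W i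

/-- Assumption (A2), part (iv) concerning the stopped pay-off functions. -/
structure PsiHyps (ψ₁ ψ₂ : ℕ → ℝ) (W : ℕ → ℝ) (M : ℝ) : Prop where
  ψ₂_nonneg : ∀ i, 0 ≤ ψ₂ i
  ψ₁_le : ∀ i, ψ₁ i ≤ M * W i
  ψ₂_lt_ψ₁ : ∀ i, ψ₂ i < ψ₁ i

end

lemma Continuous.integrable_of_compactSpace {X : Type*} [TopologicalSpace X] [CompactSpace X]
    [MeasurableSpace X] [OpensMeasurableSpace X] {ρ : Measure X} [IsFiniteMeasure ρ]
    {f : X → ℝ} (hf : Continuous f) : Integrable f ρ :=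
  hf.integrable_of_hasCompactSupport (HasCompactSupport.of_compactSpace f)

lemma summable_integral_of_sum_range_le {X : Type*} [MeasurableSpace X] {ρ : Measure X}
    [IsProbabilityMeasure ρ] {f : ℕ → X → ℝ} {K : ℝ} (hint : ∀ j, Integrable (f j) ρ)
    (hnn : ∀ j x, 0 ≤ f j x) (hle : ∀ n x, ∑ j ∈ Finset.range n, f j x ≤ K) :
    Summable (fun j => ∫ x, f j x ∂ρ) ∧ ∑' j, ∫ x, f j x ∂ρ ≤ K := by
  have hnn' : ∀ j, 0 ≤ ∫ x, f j x ∂ρ := fun j => integral_nonneg (hnn j)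
  have hpartial : ∀ n, ∑ j ∈ Finset.range n, ∫ x, f j x ∂ρ ≤ K := fun n => by
    rw [← integral_finsetSum _ fun j _ => hint j]
    calc ∫ x, ∑ j ∈ Finset.range n, f j x ∂ρ ≤ ∫ _, K ∂ρ :=
          integral_mono (integrable_finsetSum _ fun j _ => hint j) (integrable_const K) (hle n)
      _ = K := by simp
  exact ⟨summable_of_sum_range_le hnn' hpartial, Real.tsum_le_of_sum_range_le hnn' hpartial⟩

lemma Real.iInf_iSup_mono {ι κ : Sort*} {F G : ι → κ → ℝ} (hF : ∀ x y, 0 ≤ F x y)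
    (hFG : ∀ x y, F x y ≤ G x y) (hG : ∀ x, BddAbove (Set.range (G x))) :
    ⨅ x, ⨆ y, F x y ≤ ⨅ x, ⨆ y, G x y :=
  ciInf_mono ⟨0, by rintro _ ⟨x, rfl⟩; exact Real.iSup_nonneg (hF x)⟩
    fun x => ciSup_mono (hG x) (hFG x)

section Rates

variable {U V : Type} {q : ℕ → ℕ → U → V → ℝ} {qb : ℕ → ℝ}

lemma RateHyps.tsum_offDiag_nonneg (hrate : RateHyps q qb) (i : ℕ) (a : U) (b : V) :
    0 ≤ ∑' j, if j = i then (0 : ℝ) else q i j a b :=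
  tsum_nonneg fun j => by
    split_ifs with hj
    · exact le_rfl
    · exact hrate.off_nonneg i j a b hj

lemma RateHyps.qb_nonneg (hrate : RateHyps q qb) (i : ℕ) : 0 ≤ qb i := by
  obtain ⟨_, ⟨⟨a, b⟩, rfl⟩⟩ : (Set.range fun ab : U × V =>
      ∑' j, if j = i then (0 : ℝ) else q i j ab.1 ab.2).Nonempty := by
    by_contra hempty
    rw [Set.not_nonempty_iff_eq_empty] at hempty
    have := hrate.stable i
    rw [hempty, isLUB_empty_iff] at this
    exact not_isBot _ this
  exact (hrate.tsum_offDiag_nonneg i a b).trans ((hrate.stable i).1 ⟨(a, b), rfl⟩)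

lemma RateHyps.neg_qb_le_diag (hrate : RateHyps q qb) (i : ℕ) (a : U) (b : V) :
    -qb i ≤ q i i a b := by
  have hsplit := (hrate.summable i a b).tsum_eq_add_tsum_ite i
  rw [hrate.conservative] at hsplit
  linarith [(hrate.stable i).1 ⟨(a, b), rfl⟩]

/-- The kernel `p(j|i,a,b)` at pure actions; `pT` is its average over `μ ⊗ ν`. -/
noncomputable def pKernel (q : ℕ → ℕ → U → V → ℝ) (qb : ℕ → ℝ) (i j : ℕ) (a : U) (b : V) : ℝ :=
  q i j a b / (qb i + 1) + if i = j then 1 else 0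

lemma pKernel_nonneg (hrate : RateHyps q qb) (i j : ℕ) (a : U) (b : V) :
    0 ≤ pKernel q qb i j a b := by
  have hd : 0 < qb i + 1 := by linarith [hrate.qb_nonneg i]
  unfold pKernel
  split_ifs with hij
  · subst hij
    rw [div_add_one hd.ne']
    exact div_nonneg (by linarith [hrate.neg_qb_le_diag i a b]) hd.le
  · rw [add_zero]
    exact div_nonneg (hrate.off_nonneg i j a b (Ne.symm hij)) hd.le

lemma A1Hyps.summable_mul_W {N : ℕ} {w : ℕ → ℕ → ℝ} {c : ℝ} {W : ℕ → ℝ}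
    (hA1 : A1Hyps q qb N w c W) (i : ℕ) (a : U) (b : V) :
    Summable fun j => q i j a b * W j := by
  simp_rw [hA1.W_def, Finset.mul_sum]
  exact summable_sum fun n hn => hA1.w_summable n (Finset.mem_range.mp hn) i a b

lemma hasSum_pKernel_mul {W : ℕ → ℝ} {i : ℕ} {a : U} {b : V}
    (hW : Summable fun j => q i j a b * W j) :
    HasSum (fun j => pKernel q qb i j a b * W j)
      ((∑' j, q i j a b * W j) / (qb i + 1) + W i) := by
  have hsplit : (fun j => pKernel q qb i j a b * W j)
      = fun j => q i j a b * W j / (qb i + 1) + if j = i then W i else 0 := by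
    funext j
    rw [pKernel, add_mul, div_mul_eq_mul_div]
    by_cases hj : j = i
    · subst hj
      simp
    · simp [hj, Ne.symm hj]
  rw [hsplit]
  exact (hW.hasSum.div_const (qb i + 1)).add (hasSum_ite_eq i (W i))

end Rates

section Operators

variable {U V : Type} [MeasurableSpace U] [MeasurableSpace V] {q : ℕ → ℕ → U → V → ℝ}
  {r : ℕ → U → V → ℝ} {qb : ℕ → ℝ} {α : ℝ} {ψ₁ ψ₂ φ φ' : ℕ → ℝ} {i : ℕ}

lemma rT_nonneg (hr : ∀ a b, 0 ≤ r i a b) (μ : ProbabilityMeasure U)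
    (ν : ProbabilityMeasure V) : 0 ≤ rT r i μ ν :=
  integral_nonneg fun b => integral_nonneg fun a => hr a b

lemma ψ₂_le_Tmap (h : ψ₂ i ≤ ψ₁ i) : ψ₂ i ≤ Tmap q r qb α ψ₁ ψ₂ φ i :=
  le_min (le_max_right _ _) h

lemma Tmap_le_ψ₁ : Tmap q r qb α ψ₁ ψ₂ φ i ≤ ψ₁ i :=
  min_le_right _ _

lemma Tmap_le_Tmap (h : Iop q r qb α φ i ≤ Iop q r qb α φ' i) :
    Tmap q r qb α ψ₁ ψ₂ φ i ≤ Tmap q r qb α ψ₁ ψ₂ φ' i :=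
  min_le_min (max_le_max h le_rfl) le_rfl

end Operators

section Averages

variable {U V : Type} [MetricSpace U] [CompactSpace U] [MetricSpace V] [CompactSpace V]
  {q : ℕ → ℕ → U → V → ℝ} {r : ℕ → U → V → ℝ} {qb : ℕ → ℝ} {N : ℕ} {w : ℕ → ℕ → ℝ} {c : ℝ}
  {W : ℕ → ℝ} {M : ℝ}

lemma exists_tsum_pKernel_mul_W_le (hA1 : A1Hyps q qb N w c W) (hA2 : A2Hyps q r W M)
    (i : ℕ) : ∃ K, ∀ a b, ∑' j, pKernel q qb i j a b * W j ≤ K := by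
  have hcont : Continuous fun ab : U × V => ∑' j, pKernel q qb i j ab.1 ab.2 * W j := by
    simp_rw [(hasSum_pKernel_mul (hA1.summable_mul_W i _ _)).tsum_eq]
    exact ((hA2.qW_cont i).div_const _).add continuous_const
  obtain ⟨K, hK⟩ := (isCompact_range hcont).bddAbove
  exact ⟨K, fun a b => hK ⟨(a, b), rfl⟩⟩

variable [MeasurableSpace U] [BorelSpace U] [MeasurableSpace V] [BorelSpace V]

lemma integral_integral_eq_integral_prod (μ : ProbabilityMeasure U) (ν : ProbabilityMeasure V)
    {f : U → V → ℝ} (hf : Continuous fun z : U × V => f z.1 z.2) :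
    ∫ b, ∫ a, f a b ∂(μ : Measure U) ∂(ν : Measure V)
      = ∫ z, f z.1 z.2 ∂(μ : Measure U).prod (ν : Measure V) :=
  (integral_prod_symm _ hf.integrable_of_compactSpace).symm

lemma pT_eq_integral (hA2 : A2Hyps q r W M) (i j : ℕ) (μ : ProbabilityMeasure U)
    (ν : ProbabilityMeasure V) :
    pT q qb i j μ ν = ∫ z, pKernel q qb i j z.1 z.2 ∂(μ : Measure U).prod (ν : Measure V) := by
  have hq := (hA2.q_cont i j).integrable_of_compactSpace
    (ρ := (μ : Measure U).prod (ν : Measure V))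
  rw [pT, qT, integral_integral_eq_integral_prod μ ν (hA2.q_cont i j)]
  simp only [pKernel]
  rw [integral_add (hq.div_const _) (integrable_const _), integral_div]
  simp

lemma pT_nonneg (hrate : RateHyps q qb) (hA2 : A2Hyps q r W M) (i j : ℕ)
    (μ : ProbabilityMeasure U) (ν : ProbabilityMeasure V) : 0 ≤ pT q qb i j μ ν := by
  rw [pT_eq_integral hA2]
  exact integral_nonneg fun z => pKernel_nonneg hrate i j z.1 z.2

lemma exists_tsum_pT_mul_W_le (hrate : RateHyps q qb) (hA1 : A1Hyps q qb N w c W)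
    (hA2 : A2Hyps q r W M) (i : ℕ) : ∃ K, ∀ μ ν,
      Summable (fun j => pT q qb i j μ ν * W j) ∧ ∑' j, pT q qb i j μ ν * W j ≤ K := by
  obtain ⟨K, hK⟩ := exists_tsum_pKernel_mul_W_le hA1 hA2 i
  have hnn : ∀ j a b, 0 ≤ pKernel q qb i j a b * W j := fun j a b =>
    mul_nonneg (pKernel_nonneg hrate i j a b) (hA1.W_pos j).le
  refine ⟨K, fun μ ν => ?_⟩
  simp_rw [pT_eq_integral hA2, ← integral_mul_const]
  have hint : ∀ j, Integrable (fun z : U × V => pKernel q qb i j z.1 z.2 * W j)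
      ((μ : Measure U).prod (ν : Measure V)) := fun j =>
    ((((hA2.q_cont i j).div_const _).add continuous_const).mul
      continuous_const).integrable_of_compactSpace
  have hpartial : ∀ n (z : U × V), ∑ j ∈ Finset.range n, pKernel q qb i j z.1 z.2 * W j ≤ K :=
    fun n z => ((hasSum_pKernel_mul (hA1.summable_mul_W i z.1 z.2)).summable.sum_le_tsum _
      fun j _ => hnn j z.1 z.2).trans (hK z.1 z.2)
  exact summable_integral_of_sum_range_le hint (fun j z => hnn j z.1 z.2) hpartial

lemma exists_tsum_pT_mul_le (hrate : RateHyps q qb) (hA1 : A1Hyps q qb N w c W)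
    (hA2 : A2Hyps q r W M) {φ : ℕ → ℝ} {C : ℝ} (hφ : ∀ j, 0 ≤ φ j)
    (hφC : ∀ j, φ j ≤ C * W j) (i : ℕ) : ∃ K, ∀ μ ν,
      Summable (fun j => pT q qb i j μ ν * φ j) ∧ ∑' j, pT q qb i j μ ν * φ j ≤ K := by
  obtain ⟨K, hK⟩ := exists_tsum_pT_mul_W_le hrate hA1 hA2 i
  refine ⟨max C 0 * K, fun μ ν => ?_⟩
  have hp := fun j => pT_nonneg hrate hA2 i j μ ν
  have hdom : ∀ j, pT q qb i j μ ν * φ j ≤ max C 0 * (pT q qb i j μ ν * W j) := fun j => by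
    rw [mul_left_comm]
    exact mul_le_mul_of_nonneg_left ((hφC j).trans (mul_le_mul_of_nonneg_right
      (le_max_left _ _) (hA1.W_pos j).le)) (hp j)
  have hsum : Summable fun j => pT q qb i j μ ν * φ j :=
    ((hK μ ν).1.mul_left _).of_nonneg_of_le (fun j => mul_nonneg (hp j) (hφ j)) hdom
  refine ⟨hsum, ?_⟩
  calc _ ≤ ∑' j, max C 0 * (pT q qb i j μ ν * W j) :=
        hsum.tsum_le_tsum hdom ((hK μ ν).1.mul_left _)
    _ = max C 0 * ∑' j, pT q qb i j μ ν * W j := tsum_mul_left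
    _ ≤ max C 0 * K := mul_le_mul_of_nonneg_left (hK μ ν).2 (le_max_right _ _)

lemma rT_le (hA2 : A2Hyps q r W M) (i : ℕ) (μ : ProbabilityMeasure U)
    (ν : ProbabilityMeasure V) : rT r i μ ν ≤ M * W i := by
  rw [rT, integral_integral_eq_integral_prod μ ν (hA2.r_cont i)]
  calc _ ≤ ∫ _, M * W i ∂(μ : Measure U).prod (ν : Measure V) :=
        integral_mono (hA2.r_cont i).integrable_of_compactSpace (integrable_const _)
          fun z => hA2.r_le i z.1 z.2
    _ = M * W i := by simp

theorem Iop_mono (hrate : RateHyps q qb) (hA1 : A1Hyps q qb N w c W) (hA2 : A2Hyps q r W M)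
    {α : ℝ} (hα : 0 < α) {φ φ' : ℕ → ℝ} {C : ℝ} (hφ : ∀ j, 0 ≤ φ j) (hle : ∀ j, φ j ≤ φ' j)
    (hφ' : ∀ j, φ' j ≤ C * W j) (i : ℕ) : Iop q r qb α φ i ≤ Iop q r qb α φ' i := by
  obtain ⟨K, hK⟩ := exists_tsum_pT_mul_le hrate hA1 hA2 (fun j => (hφ j).trans (hle j)) hφ' i
  have hqb := hrate.qb_nonneg i
  have hD : 0 < α + qb i + 1 := by linarith
  have hcoef : 0 ≤ (qb i + 1) / (α + qb i + 1) := div_nonneg (by linarith) hD.le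
  have hp := pT_nonneg hrate hA2 i
  have hmono : ∀ μ ν, ∑' j, pT q qb i j μ ν * φ j ≤ ∑' j, pT q qb i j μ ν * φ' j :=
    fun μ ν => by
      have hpt : ∀ j, pT q qb i j μ ν * φ j ≤ pT q qb i j μ ν * φ' j :=
        fun j => mul_le_mul_of_nonneg_left (hle j) (hp j μ ν)
      exact Summable.tsum_le_tsum hpt
        ((hK μ ν).1.of_nonneg_of_le (fun j => mul_nonneg (hp j μ ν) (hφ j)) hpt) (hK μ ν).1
  apply Real.iInf_iSup_mono
  · intro μ ν
    exact add_nonneg (div_nonneg (rT_nonneg (hA2.r_nonneg i) μ ν) hD.le)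
      (mul_nonneg hcoef (tsum_nonneg fun j => mul_nonneg (hp j μ ν) (hφ j)))
  · intro μ ν
    exact add_le_add le_rfl (mul_le_mul_of_nonneg_left (hmono μ ν) hcoef)
  · intro μ
    refine ⟨M * W i / (α + qb i + 1) + (qb i + 1) / (α + qb i + 1) * K, ?_⟩
    rintro _ ⟨ν, rfl⟩
    exact add_le_add (div_le_div_of_nonneg_right (rT_le hA2 i μ ν) hD.le)
      (mul_le_mul_of_nonneg_left (hK μ ν).2 hcoef)

end Averages

theorem stmt13_general {U V : Type} [MetricSpace U] [CompactSpace U]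
    [MeasurableSpace U] [BorelSpace U]
    [MetricSpace V] [CompactSpace V]
    [MeasurableSpace V] [BorelSpace V]
    (q : ℕ → ℕ → U → V → ℝ) (r : ℕ → U → V → ℝ) (qb : ℕ → ℝ)
    (N : ℕ) (w : ℕ → ℕ → ℝ) (c : ℝ) (W : ℕ → ℝ) (M : ℝ) (α : ℝ) (ψ₁ ψ₂ : ℕ → ℝ)
    (hrate : RateHyps q qb) (hA1 : A1Hyps q qb N w c W)
    (hA2 : A2Hyps q r W M) (hψ : PsiHyps ψ₁ ψ₂ W M) (hα : 0 < α) :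
    ∀ u : ℕ → ℕ → ℝ, u 0 = ψ₂ → (∀ n, u (n + 1) = Tmap q r qb α ψ₁ ψ₂ (u n)) →
      ∀ (n : ℕ) (i : ℕ), u n i ≤ u (n + 1) i := by
  intro u h0 hrec
  have hψ₂₁ : ∀ i, ψ₂ i ≤ ψ₁ i := fun i => (hψ.ψ₂_lt_ψ₁ i).le
  have hbetween : ∀ n i, ψ₂ i ≤ u n i ∧ u n i ≤ ψ₁ i := by
    rintro (_ | n) i
    · rw [h0]
      exact ⟨le_rfl, hψ₂₁ i⟩
    · rw [hrec n]
      exact ⟨ψ₂_le_Tmap (hψ₂₁ i), Tmap_le_ψ₁⟩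
  intro n
  induction n with
  | zero =>
    intro i
    rw [hrec 0, h0]
    exact ψ₂_le_Tmap (hψ₂₁ i)
  | succ n ih =>
    intro i
    rw [hrec n, hrec (n + 1)]
    exact Tmap_le_Tmap (Iop_mono hrate hA1 hA2 hα
      (fun j => (hψ.ψ₂_nonneg j).trans (hbetween n j).1) ih
      (fun j => (hbetween (n + 1) j).2.trans (hψ.ψ₁_le j)) i)

/-- Proposition 2: the iterates `u_0 = ψ₂`, `u_n = T u_(n-1)` are pointwise
nondecreasing. -/
theorem stmt13 {U V : Type} [MetricSpace U] [CompactSpace U] [Nonempty U]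
    [MeasurableSpace U] [BorelSpace U]
    [MetricSpace V] [CompactSpace V] [Nonempty V]
    [MeasurableSpace V] [BorelSpace V]
    (q : ℕ → ℕ → U → V → ℝ) (r : ℕ → U → V → ℝ) (qb : ℕ → ℝ)
    (N : ℕ) (w : ℕ → ℕ → ℝ) (c : ℝ) (W : ℕ → ℝ) (M : ℝ) (α : ℝ) (ψ₁ ψ₂ : ℕ → ℝ)
    (hrate : RateHyps q qb) (hA1 : A1Hyps q qb N w c W)
    (hA2 : A2Hyps q r W M) (hψ : PsiHyps ψ₁ ψ₂ W M) (hα : 0 < α) :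
    ∀ u : ℕ → ℕ → ℝ, u 0 = ψ₂ → (∀ n, u (n + 1) = Tmap q r qb α ψ₁ ψ₂ (u n)) →
      ∀ (n : ℕ) (i : ℕ), u n i ≤ u (n + 1) i :=
  stmt13_general q r qb N w c W M α ψ₁ ψ₂ hrate hA1 hA2 hψ hα
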